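/- arXiv:2009.06937 — 5 statements merged into one kernel-verified Lean document; each statement's English description precedes it below -/
import Mathlib

section
/- For integers $n \geq 2$, $s \geq 1$, $t \geq 1$, define $S_{n,s,t} = \sum_{i=0}^{N(n,s)} (-1)^i \binom{s}{i}\binom{t+n-2i}{n-2i}$ where $N(n,s) = \min\{\lfloor n/2 \rfloor, s\}$. Then $S_{n,s,t} = S_{n,s-1,t-1} + S_{n-1,s-1,t-1}$. -/
/-- The expected number of conditions `S_{n,s,t}` imposed by `s` general
codimension-2 linear subspaces of `ℙⁿ` on forms of degree `t`, computed via
inclusion-exclusion: `S_{n,s,t} = ∑_{i=0}^{N(n,s)} (-1)^i C(s,i) C(t+n-2i, n-2i)`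
with `N(n,s) = min(⌊n/2⌋, s)`. -/
def S (n s t : ℕ) : ℤ :=
  ∑ i ∈ Finset.range (min (n / 2) s + 1),
    (-1 : ℤ) ^ i * (s.choose i : ℤ) * ((t + n - 2 * i).choose (n - 2 * i) : ℤ)

lemma choose_step (t n i : ℕ) (h : 2 * i ≤ n) :
    ((t + 1 + (n + 1) - 2 * i).choose (n + 1 - 2 * i) : ℤ) =
      ((t + (n + 1) - 2 * i).choose (n + 1 - 2 * i) : ℤ) +
        ((t + 1 + n - 2 * i).choose (n - 2 * i) : ℤ) := by
  obtain ⟨m, rfl⟩ : ∃ m, n = m + 2 * i := ⟨n - 2 * i, by omega⟩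
  have e1 : t + 1 + (m + 2 * i + 1) - 2 * i = t + m + 1 + 1 := by omega
  have e2 : m + 2 * i + 1 - 2 * i = m + 1 := by omega
  have e3 : t + (m + 2 * i + 1) - 2 * i = t + m + 1 := by omega
  have e4 : t + 1 + (m + 2 * i) - 2 * i = t + m + 1 := by omega
  have e5 : m + 2 * i - 2 * i = m := by omega
  rw [e1, e2, e3, e4, e5]
  rw [Nat.choose_succ_succ (t + m + 1) m]
  push_cast
  ring

lemma lemB (n s t : ℕ) : S (n + 1) s (t + 1) = S (n + 1) s t + S n s (t + 1) := by
  unfold S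
  by_cases h : n % 2 = 1 ∧ n / 2 < s
  · -- n odd, s ≥ n/2+1
    have h1 : min ((n + 1) / 2) s = n / 2 + 1 := by omega
    have h2 : min (n / 2) s = n / 2 := by omega
    rw [h1, h2]
    rw [Finset.sum_range_succ, Finset.sum_range_succ ((fun i => (-1 : ℤ) ^ i *
      (s.choose i : ℤ) * ((t + (n + 1) - 2 * i).choose (n + 1 - 2 * i) : ℤ))) (n / 2 + 1)]
    have e1 : n + 1 - 2 * (n / 2 + 1) = 0 := by omega
    rw [e1]
    rw [show (∑ i ∈ Finset.range (n / 2 + 1), (-1 : ℤ) ^ i * (s.choose i : ℤ) *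
        ((t + 1 + (n + 1) - 2 * i).choose (n + 1 - 2 * i) : ℤ)) =
      ∑ i ∈ Finset.range (n / 2 + 1), ((-1 : ℤ) ^ i * (s.choose i : ℤ) *
        ((t + (n + 1) - 2 * i).choose (n + 1 - 2 * i) : ℤ) +
        (-1 : ℤ) ^ i * (s.choose i : ℤ) *
        ((t + 1 + n - 2 * i).choose (n - 2 * i) : ℤ)) from
      Finset.sum_congr rfl fun i hi => by
        rw [choose_step t n i (by simp [Finset.mem_range] at hi; omega)]; ring]
    rw [Finset.sum_add_distrib]
    simp [Nat.choose_zero_right]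
    ring
  · have h1 : min ((n + 1) / 2) s = min (n / 2) s := by omega
    rw [h1, ← Finset.sum_add_distrib]
    refine Finset.sum_congr rfl fun i hi => ?_
    have hi2 : 2 * i ≤ n := by simp [Finset.mem_range] at hi; omega
    rw [choose_step t n i hi2]; ring

lemma lemA (n s t : ℕ) : S (n + 2) (s + 1) t = S (n + 2) s t - S n s t := by
  unfold S
  have hm : min ((n + 2) / 2) (s + 1) = min (n / 2) s + 1 := by omega
  rw [hm, Finset.sum_range_succ']
  have key : ∀ i ∈ Finset.range (min (n / 2) s + 1),
      (-1 : ℤ) ^ (i + 1) * ((s + 1).choose (i + 1) : ℤ) *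
        ((t + (n + 2) - 2 * (i + 1)).choose (n + 2 - 2 * (i + 1)) : ℤ) =
      (-1 : ℤ) ^ (i + 1) * (s.choose (i + 1) : ℤ) *
        ((t + (n + 2) - 2 * (i + 1)).choose (n + 2 - 2 * (i + 1)) : ℤ) -
      (-1 : ℤ) ^ i * (s.choose i : ℤ) *
        ((t + n - 2 * i).choose (n - 2 * i) : ℤ) := by
    intro i hi
    have hi2 : 2 * i ≤ n := by simp [Finset.mem_range] at hi; omega
    have e1 : t + (n + 2) - 2 * (i + 1) = t + n - 2 * i := by omega
    have e2 : n + 2 - 2 * (i + 1) = n - 2 * i := by omega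
    rw [e1, e2, Nat.choose_succ_succ s i]
    push_cast
    ring
  rw [Finset.sum_congr rfl key, Finset.sum_sub_distrib]
  have reassemble : (∑ i ∈ Finset.range (min (n / 2) s + 1),
      (-1 : ℤ) ^ (i + 1) * (s.choose (i + 1) : ℤ) *
        ((t + (n + 2) - 2 * (i + 1)).choose (n + 2 - 2 * (i + 1)) : ℤ)) +
      (-1 : ℤ) ^ 0 * ((s + 1).choose 0 : ℤ) *
        ((t + (n + 2) - 2 * 0).choose (n + 2 - 2 * 0) : ℤ) =
      ∑ i ∈ Finset.range (min (n / 2) s + 1 + 1),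
      (-1 : ℤ) ^ i * (s.choose i : ℤ) *
        ((t + (n + 2) - 2 * i).choose (n + 2 - 2 * i) : ℤ) := by
    conv_rhs => rw [Finset.sum_range_succ']
    congr 1
    simp
  have hrange : ∑ i ∈ Finset.range (min (n / 2) s + 1 + 1),
      (-1 : ℤ) ^ i * (s.choose i : ℤ) *
        ((t + (n + 2) - 2 * i).choose (n + 2 - 2 * i) : ℤ) =
      ∑ i ∈ Finset.range (min ((n + 2) / 2) s + 1),
      (-1 : ℤ) ^ i * (s.choose i : ℤ) *
        ((t + (n + 2) - 2 * i).choose (n + 2 - 2 * i) : ℤ) := by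
    rcases le_or_gt s (n / 2) with hle | hlt
    · have h1 : min (n / 2) s = s := by omega
      have h2 : min ((n + 2) / 2) s = s := by omega
      rw [h1, h2, Finset.sum_range_succ]
      simp [Nat.choose_succ_self]
    · have h1 : min (n / 2) s + 1 + 1 = min ((n + 2) / 2) s + 1 := by omega
      rw [h1]
  linarith [reassemble, hrange]

theorem S_recursion (n s t : ℕ) (hn : 2 ≤ n) (hs : 1 ≤ s) (ht : 1 ≤ t) :
    S n s t = S n (s - 1) (t - 1) + S (n - 1) (s - 1) (t - 1) := by
  obtain ⟨m, rfl⟩ : ∃ m, n = m + 2 := ⟨n - 2, by omega⟩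
  obtain ⟨r, rfl⟩ : ∃ r, s = r + 1 := ⟨s - 1, by omega⟩
  obtain ⟨u, rfl⟩ : ∃ u, t = u + 1 := ⟨t - 1, by omega⟩
  simp only [Nat.add_sub_cancel]
  have hA := lemA m (r) (u + 1)
  have hB1 := lemB (m + 1) r u
  have hB2 := lemB m r u
  have e : m + 2 - 1 = m + 1 := by omega
  rw [e]
  -- goal: S (m+2) (r+1) (u+1) = S (m+2) r u + S (m+1) r u
  linarith
end

section
/- For integers $n \geq 2$, $k \geq 3$, and all $p$ with $0 \leq p \leq \lfloor n/2 \rfloor - 1$, the quantity $S_{n-2p,\,n+1-p,\,n+k} = \sum_{i=0}^{N(n-2p,n+1-p)} (-1)^i \binom{n+1-p}{i}\binom{n+k+n-2p-2i}{n-2p-2i}$ is strictly positive, where $N(a,b)=\min\{\lfloor a/2\rfloor, b\}$. -/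
open PowerSeries Finset

namespace PowerSeries

variable {R : Type*} [CommRing R]

theorem coeff_one_add_X_pow (s j : ℕ) : coeff j ((1 + X : R⟦X⟧) ^ s) = s.choose j := by
  have : (1 + X : R⟦X⟧) ^ s = ((1 + Polynomial.X) ^ s : Polynomial R) := by simp
  rw [this, Polynomial.coeff_coe, Polynomial.coeff_one_add_X_pow]

theorem coeff_one_sub_X_sq_pow_mul (s m : ℕ) (f : R⟦X⟧) :
    coeff m ((1 - X ^ 2) ^ s * f) = ∑ i ∈ range (s + 1),
      (-1) ^ i * s.choose i * if 2 * i ≤ m then coeff (m - 2 * i) f else 0 := by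
  rw [sub_eq_neg_add, add_pow, sum_mul, map_sum]
  refine sum_congr rfl fun i _ => ?_
  rw [one_pow, mul_one, neg_pow, ← pow_mul, ← coeff_X_pow_mul', ← map_natCast (C (R := R)),
    ← map_one (C (R := R)), ← map_neg, ← map_pow, ← coeff_C_mul, map_mul (C (R := R))]
  ring_nf

theorem one_sub_X_sq_pow_mul_invOneSubPow (s d : ℕ) :
    (1 - X ^ 2 : R⟦X⟧) ^ s * (invOneSubPow R (d + s)).val
      = (1 + X) ^ s * (invOneSubPow R d).val := by
  rw [← one_sub_pow_mul_invOneSubPow_val_add_eq_invOneSubPow_val R d s, ← mul_assoc, ← mul_pow]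
  ring

end PowerSeries

theorem S_eq_coeff (m s t : ℕ) :
    S m s t = coeff m ((1 - X ^ 2) ^ s * (invOneSubPow ℤ (t + 1)).val) := by
  rw [coeff_one_sub_X_sq_pow_mul, invOneSubPow_val_succ_eq_mk_add_choose, S,
    ← sum_subset (range_subset_range.mpr (by omega : min (m / 2) s + 1 ≤ s + 1))]
  · refine sum_congr rfl fun i hi => ?_
    have hi : 2 * i ≤ m := by have := mem_range.mp hi; omega
    rw [if_pos hi, coeff_mk, Nat.add_sub_assoc hi, Nat.choose_symm_add]
  · intro i hi hi'
    rw [if_neg (by rw [mem_range] at hi hi'; omega), mul_zero]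

theorem S_pos_of_le {s t : ℕ} (m : ℕ) (h : s ≤ t) : 0 < S m s t := by
  obtain ⟨d, rfl⟩ := Nat.exists_eq_add_of_le h
  rw [S_eq_coeff, show s + d + 1 = d + 1 + s by ring, one_sub_X_sq_pow_mul_invOneSubPow,
    coeff_mul, invOneSubPow_val_succ_eq_mk_add_choose]
  refine sum_pos' (fun _ _ => by simp only [coeff_one_add_X_pow, coeff_mk]; positivity)
    ⟨(0, m), by simp, ?_⟩
  simp only [coeff_one_add_X_pow, coeff_mk, Nat.choose_zero_right, Nat.cast_one, one_mul]
  exact_mod_cast Nat.choose_pos (Nat.le_add_right d m)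

theorem S_pos_general (n k p : ℕ) (hk : 3 ≤ k) :
    0 < S (n - 2 * p) (n + 1 - p) (n + k) :=
  S_pos_of_le _ (by omega)

theorem S_pos (n k p : ℕ) (hn : 2 ≤ n) (hk : 3 ≤ k) (hp : p ≤ n / 2 - 1) :
    0 < S (n - 2 * p) (n + 1 - p) (n + k) :=
  S_pos_general n k p hk
end

section
/- For all integers $n \geq 2$, $k \geq 3$, $0 \leq p \leq \lfloor n/2\rfloor - 1$, and $0 \leq j \leq n - p$, one has $S_{n-2p,\,n+1-p-j,\,n+k-j} > 0$, where $S_{m,s,t} = \sum_{i=0}^{\min\{\lfloor m/2\rfloor,s\}} (-1)^i \binom{s}{i}\binom{t+m-2i}{m-2i}$. -/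
namespace SPosAux

/-- Generalized binomial coefficient: `0` when the lower index is negative. -/
def c (a b : ℤ) : ℤ := if 0 ≤ b then (a.toNat.choose b.toNat : ℤ) else 0

lemma c_nonneg (a b : ℤ) : 0 ≤ c a b := by
  unfold c; split
  · exact Int.natCast_nonneg _
  · exact le_refl 0

lemma c_neg (a : ℤ) {b : ℤ} (hb : b < 0) : c a b = 0 := if_neg (by omega)

lemma c_pos {a b : ℤ} (hb : 0 ≤ b) (hba : b ≤ a) : 0 < c a b := by
  rw [c, if_pos hb]
  exact_mod_cast Nat.choose_pos (by omega)

lemma c_pascal (a b : ℤ) (ha : 1 ≤ a) : c a b = c (a-1) b + c (a-1) (b-1) := by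
  unfold c
  rcases lt_trichotomy b 0 with h | h | h
  · rw [if_neg (by omega), if_neg (by omega), if_neg (by omega)]; ring
  · subst h
    rw [if_pos le_rfl, if_pos le_rfl, if_neg (by omega)]
    have h1 : (0:ℤ).toNat = 0 := rfl
    simp
  · rw [if_pos (by omega), if_pos (by omega), if_pos (by omega)]
    have h1 : a.toNat = (a-1).toNat + 1 := by omega
    have h2 : b.toNat = (b-1).toNat + 1 := by omega
    rw [h1, h2, Nat.choose_succ_succ']
    push_cast; ring

def F (m : ℤ) (s : ℕ) (t : ℤ) : ℤ :=
  ∑ i ∈ Finset.range (s+1), (-1:ℤ)^i * (s.choose i : ℤ) * c (t + m - 2*i) (m - 2*i)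

def G (m : ℤ) (s : ℕ) (q : ℤ) : ℤ :=
  ∑ l ∈ Finset.range (s+1), (s.choose l : ℤ) * c (q + m - l) (m - l)

lemma S_eq_F (m s t : ℕ) : S m s t = F (m:ℤ) s (t:ℤ) := by
  rw [S, F]
  have hsub : Finset.range (min (m/2) s + 1) ⊆ Finset.range (s+1) :=
    Finset.range_subset_range.2 (by omega)
  rw [← Finset.sum_subset hsub]
  · apply Finset.sum_congr rfl
    intro i hi
    have hi2 : 2*i ≤ m := by
      have := Finset.mem_range.1 hi; omega
    rw [c, if_pos (by push_cast; omega)]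
    congr 2
    · have e1 : ((t:ℤ) + m - 2*i).toNat = t + m - 2*i := by push_cast; omega
      have e2 : ((m:ℤ) - 2*i).toNat = m - 2*i := by push_cast; omega
      rw [e1, e2]
  · intro i hi hni
    have h1 : i ∈ Finset.range (s+1) := hi
    have h4 : ¬ i < min (m/2) s + 1 := by
      intro h; exact hni (Finset.mem_range.2 h)
    have : (m:ℤ) - 2*i < 0 := by
      have := Finset.mem_range.1 h1
      push_cast; omega
    rw [c_neg _ this, mul_zero]

lemma R1 (m : ℤ) (s : ℕ) (t : ℤ) : F m (s+1) t = F m s t - F (m-2) s t := by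
  have hpeel := Finset.sum_range_succ'
    (fun i => (-1:ℤ)^i * ((s+1).choose i : ℤ) * c (t + m - 2*i) (m - 2*i)) (s+1)
  rw [F, hpeel]
  have hstep : ∀ i ∈ Finset.range (s+1),
      (-1:ℤ)^(i+1) * ((s+1).choose (i+1) : ℤ) * c (t + m - 2*(i+1:ℕ)) (m - 2*(i+1:ℕ))
      = -((-1:ℤ)^i * (s.choose i : ℤ) * c (t + (m-2) - 2*i) ((m-2) - 2*i))
        + (-((-1:ℤ)^(i+1) * (s.choose (i+1) : ℤ) * c (t + m - 2*((i+1:ℕ):ℤ)) (m - 2*((i+1:ℕ):ℤ)))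
           * (-1)) := by
    intro i _
    rw [Nat.choose_succ_succ]
    have e1 : (t + m - 2*((i+1:ℕ):ℤ)) = t + (m-2) - 2*i := by push_cast; ring
    have e2 : (m - 2*((i+1:ℕ):ℤ)) = (m-2) - 2*i := by push_cast; ring
    rw [e1, e2]
    push_cast; ring
  rw [Finset.sum_congr rfl hstep, Finset.sum_add_distrib]
  have hsum2 : ∑ i ∈ Finset.range (s+1),
      (-((-1:ℤ)^(i+1) * (s.choose (i+1) : ℤ) * c (t + m - 2*((i+1:ℕ):ℤ)) (m - 2*((i+1:ℕ):ℤ))) * (-1))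
      = ∑ i ∈ Finset.range (s+1),
        (-1:ℤ)^(i+1) * (s.choose (i+1) : ℤ) * c (t + m - 2*((i+1:ℕ):ℤ)) (m - 2*((i+1:ℕ):ℤ)) := by
    apply Finset.sum_congr rfl; intro i _; ring
  rw [hsum2]
  have hshift := Finset.sum_range_succ'
    (fun i => (-1:ℤ)^i * (s.choose i : ℤ) * c (t + m - 2*i) (m - 2*i)) (s+1)
  have htop : (∑ i ∈ Finset.range (s+1+1),
      (-1:ℤ)^i * (s.choose i : ℤ) * c (t + m - 2*i) (m - 2*i))
      = F m s t := by
    rw [Finset.sum_range_succ, F]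
    simp [Nat.choose_succ_self]
  rw [htop] at hshift
  -- hshift : F m s t = (∑ i ∈ range (s+1), f (i+1)) + f 0
  have hF2 : ∑ i ∈ Finset.range (s+1),
      -((-1:ℤ)^i * (s.choose i : ℤ) * c (t + (m-2) - 2*i) ((m-2) - 2*i))
      = -F (m-2) s t := by
    rw [F, ← Finset.sum_neg_distrib]
  rw [hF2]
  have : (∑ i ∈ Finset.range (s+1),
      (-1:ℤ)^(i+1) * (s.choose (i+1) : ℤ) * c (t + m - 2*((i+1:ℕ):ℤ)) (m - 2*((i+1:ℕ):ℤ)))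
      = F m s t - (-1:ℤ)^0 * (s.choose 0 : ℤ) * c (t + m - 2*(0:ℕ)) (m - 2*(0:ℕ)) := by
    push_cast at hshift ⊢
    linarith [hshift]
  push_cast at this ⊢
  rw [this]
  simp [Nat.choose_zero_right]
  ring

lemma R2 (m : ℤ) (s : ℕ) (t : ℤ) (ht : 1 ≤ t) : F m s t = F m s (t-1) + F (m-1) s t := by
  rw [F, F, F, ← Finset.sum_add_distrib]
  apply Finset.sum_congr rfl
  intro i _
  by_cases hb : (m:ℤ) - 2*i < 0
  · rw [c_neg _ hb, c_neg _ hb, c_neg _ (by omega : (m-1:ℤ) - 2*i < 0)]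
    ring
  · push_neg at hb
    rw [c_pascal (t + m - 2*i) (m - 2*i) (by omega)]
    have e1 : t + m - 2*(i:ℤ) - 1 = t - 1 + m - 2*i := by ring
    have e2 : t + m - 2*(i:ℤ) - 1 = t + (m-1) - 2*i := by ring
    have e3 : m - 2*(i:ℤ) - 1 = (m-1) - 2*i := by ring
    rw [e1]
    rw [show c (t - 1 + m - 2*(i:ℤ)) (m - 2*i - 1) = c (t + (m-1) - 2*i) ((m-1) - 2*i) by
      rw [← e1, e2, e3]]
    ring

lemma key (m : ℤ) (s : ℕ) (t : ℤ) (ht : 1 ≤ t) :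
    F m (s+1) t = F m s (t-1) + F (m-1) s (t-1) := by
  rw [R1, R2 m s t ht, R2 (m-1) s t ht]
  have : (m:ℤ) - 1 - 1 = m - 2 := by ring
  rw [this]
  ring

lemma G_rec (m : ℤ) (s : ℕ) (q : ℤ) : G m (s+1) q = G m s q + G (m-1) s q := by
  have hpeel := Finset.sum_range_succ'
    (fun l => (((s+1).choose l : ℕ) : ℤ) * c (q + m - l) (m - l)) (s+1)
  rw [G, hpeel]
  have hstep : ∀ l ∈ Finset.range (s+1),
      (((s+1).choose (l+1) : ℕ) : ℤ) * c (q + m - ((l+1:ℕ):ℤ)) (m - ((l+1:ℕ):ℤ))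
      = (s.choose l : ℤ) * c (q + (m-1) - l) ((m-1) - l)
        + (s.choose (l+1) : ℤ) * c (q + m - ((l+1:ℕ):ℤ)) (m - ((l+1:ℕ):ℤ)) := by
    intro l _
    rw [Nat.choose_succ_succ]
    have e1 : (q + m - ((l+1:ℕ):ℤ)) = q + (m-1) - l := by push_cast; ring
    have e2 : (m - ((l+1:ℕ):ℤ)) = (m-1) - l := by push_cast; ring
    rw [e1, e2]
    push_cast; ring
  rw [Finset.sum_congr rfl hstep, Finset.sum_add_distrib]
  have hshift := Finset.sum_range_succ'
    (fun l => (s.choose l : ℤ) * c (q + m - l) (m - l)) (s+1)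
  have htop : (∑ l ∈ Finset.range (s+1+1), (s.choose l : ℤ) * c (q + m - l) (m - l))
      = G m s q := by
    rw [Finset.sum_range_succ, G]
    simp [Nat.choose_succ_self]
  rw [htop] at hshift
  have hG1 : ∑ l ∈ Finset.range (s+1),
      (s.choose l : ℤ) * c (q + (m-1) - l) ((m-1) - l) = G (m-1) s q := by
    rw [G]
  rw [hG1]
  have : (∑ l ∈ Finset.range (s+1),
      (s.choose (l+1) : ℤ) * c (q + m - ((l+1:ℕ):ℤ)) (m - ((l+1:ℕ):ℤ)))
      = G m s q - (s.choose 0 : ℤ) * c (q + m - ((0:ℕ):ℤ)) (m - ((0:ℕ):ℤ)) := by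
    push_cast at hshift ⊢
    linarith [hshift]
  push_cast at this ⊢
  rw [this]
  simp [Nat.choose_zero_right]
  ring

lemma F_eq_G : ∀ (s : ℕ) (m t : ℤ), (s:ℤ) ≤ t → F m s t = G m s (t - s)
  | 0, m, t, _ => by
    simp [F, G]
  | (s+1), m, t, h => by
    have hs1 : (s:ℤ) ≤ t - 1 := by push_cast at h; omega
    have ht1 : (1:ℤ) ≤ t := by push_cast at h; omega
    rw [key m s t ht1, F_eq_G s m (t-1) hs1, F_eq_G s (m-1) (t-1) hs1, G_rec]
    have : t - ((s:ℤ)+1) = t - 1 - s := by ring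
    push_cast
    rw [this]

end SPosAux

theorem S_pos_strong (n k p j : ℕ) (hn : 2 ≤ n) (hk : 3 ≤ k) (hp : p ≤ n / 2 - 1)
    (hj : j ≤ n - p) :
    0 < S (n - 2 * p) (n + 1 - p - j) (n + k - j) := by
  open SPosAux in
  set m := n - 2 * p with hm
  set s := n + 1 - p - j with hs
  set t := n + k - j with ht
  have hst : (s:ℤ) ≤ (t:ℤ) := by
    have h2p : 2 * p + 2 ≤ n := by omega
    push_cast [hs, ht]
    omega
  rw [SPosAux.S_eq_F, SPosAux.F_eq_G s m t hst]
  rw [SPosAux.G]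
  apply Finset.sum_pos'
  · intro l _
    exact mul_nonneg (Int.natCast_nonneg _) (SPosAux.c_nonneg _ _)
  · refine ⟨0, Finset.mem_range.2 (by omega), ?_⟩
    simp only [Nat.choose_zero_right, Nat.cast_one, one_mul, Nat.cast_zero, sub_zero]
    exact SPosAux.c_pos (Int.natCast_nonneg m) (by omega)
end

section
/- With the recursive virtual-dimension function $V$ as above, for all integers $n \geq 6$ and $0 \leq j \leq n-1$ one has $V(n, \underbrace{(3,\ldots,3)}_{n+1-j}, 3(n-j)+1) < 0$, except that $V(6, (3,3,3,3,3,3,3), 19) = 0$ and the small base cases in $\mathbb{P}^6$ listed above are $\leq 0$. In particular, $V(n, \underbrace{(3,\ldots,3)}_{n+1}, 3n+1) \leq 0$ for all $n \geq 6$. -/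
/-- The recursively defined virtual dimension `V(n, (m₁,…,m_s), t)` of the linear
system of degree-`t` forms in `ℙⁿ` vanishing to orders `mᵢ` along `s` general
codimension-2 linear subspaces.  Here `Ring.choose (t+n) n` is the polynomial
binomial coefficient `(t+n)(t+n-1)⋯(t+1)/n!` (the Hilbert-polynomial value), the
multiplicity list is processed at its head, and a multiplicity reaching `0` is
dropped. -/
def V : ℕ → List ℕ → ℤ → ℤ
  | n, [], t => Ring.choose (t + (n : ℤ)) n
  | 2, M@(_ :: _), t =>
      Ring.choose (t + 2) 2 - (M.map (fun m => ((m + 1).choose 2 : ℤ))).sum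
  | (n + 3), 0 :: M, t => V (n + 3) M t
  | (n + 3), 1 :: M, t => V (n + 3) M (t - 1) + V (n + 2) M (t - 1)
  | (n + 3), (m + 2) :: M, t =>
      V (n + 3) ((m + 1) :: M) (t - 1) + V (n + 2) M (t - ((m : ℤ) + 2))
  | 0, _ :: _, _ => 0
  | 1, _ :: _, _ => 0
  termination_by n M _ => 2 * n + M.sum + M.length
  decreasing_by all_goals (simp [List.sum_cons]; try omega)

/-- Unfolding the recursion three times on a leading multiplicity `3`. -/
lemma V_cons3 (n : ℕ) (M : List ℕ) (t : ℤ) :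
    V (n+3) (3 :: M) t = V (n+3) M (t-3) + 3 * V (n+2) M (t-3) := by
  show V (n+3) ((1+2) :: M) t = _
  rw [V]
  show V (n+3) ((0+2) :: M) (t-1) + _ = _
  rw [V]
  rw [show (0:ℕ)+1 = 1 from rfl, V]
  push_cast
  ring_nf

lemma V_nil (n : ℕ) (t : ℤ) : V n [] t = Ring.choose (t + (n : ℤ)) n := by
  rcases n with _|_|_|m <;> rw [V]

lemma V_single3 (n : ℕ) : V (n+3) [3] 1 = 0 := by
  rw [V_cons3, V_nil, V_nil]
  have h1 : (1:ℤ) - 3 + ((n+3 : ℕ) : ℤ) = ((n+1 : ℕ) : ℤ) := by push_cast; ring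
  have h2 : (1:ℤ) - 3 + ((n+2 : ℕ) : ℤ) = ((n : ℕ) : ℤ) := by push_cast; ring
  rw [h1, h2, Ring.choose_natCast, Ring.choose_natCast,
    Nat.choose_eq_zero_of_lt (by omega), Nat.choose_eq_zero_of_lt (by omega)]
  simp

set_option maxHeartbeats 2000000 in
lemma V_base6 : ∀ k ≤ 6, V 6 (List.replicate (k+1) 3) (3*(k:ℤ)+1) ≤ 0 := by
  intro k hk
  interval_cases k <;> · simp only [List.replicate]; norm_num; simp [V]; decide

lemma V_key : ∀ m k : ℕ, k ≤ m + 6 →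
    V (m+6) (List.replicate (k+1) 3) (3*(k:ℤ)+1) ≤ 0 := by
  intro m
  induction m with
  | zero => exact V_base6
  | succ m ih =>
    intro k
    induction k with
    | zero =>
      intro _
      simpa using le_of_eq (V_single3 (m+4))
    | succ k ihk =>
      intro hk
      have h1 := ihk (by omega)
      have h2 := ih k (by omega)
      have hc := V_cons3 (m+4) (List.replicate (k+1) 3) (3*((k:ℤ)+1)+1)
      have e : (3:ℤ)*((k:ℤ)+1) + 1 - 3 = 3*(k:ℤ) + 1 := by ring
      rw [e] at hc
      have e2 : m + 4 + 3 = m + 1 + 6 := by omega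
      have e3 : m + 4 + 2 = m + 6 := by omega
      rw [e2, e3] at hc
      rw [show List.replicate (k+1+1) 3 = 3 :: List.replicate (k+1) 3 from rfl]
      push_cast
      rw [show (3:ℤ)*((k:ℤ)+1)+1 = 3*((k:ℤ)+1)+1 from rfl] at hc ⊢
      rw [hc]
      linarith

set_option maxHeartbeats 2000000 in
theorem V_triple_nonpos :
    (∀ n j : ℕ, 6 ≤ n → j ≤ n - 1 →
      V n (List.replicate (n + 1 - j) 3) (3 * ((n : ℤ) - (j : ℤ)) + 1) ≤ 0) ∧
    V 6 (List.replicate 7 3) 19 = 0 ∧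
    (∀ n : ℕ, 6 ≤ n → V n (List.replicate (n + 1) 3) (3 * (n : ℤ) + 1) ≤ 0) := by
  refine ⟨?_, ?_, ?_⟩
  · intro n j h6 hj
    obtain ⟨m, rfl⟩ : ∃ m, n = m + 6 := ⟨n - 6, by omega⟩
    have h := V_key m (m+6-j) (by omega)
    have e1 : m + 6 + 1 - j = (m+6-j) + 1 := by omega
    have e2 : ((m+6-j : ℕ) : ℤ) = ((m+6 : ℕ) : ℤ) - (j : ℤ) := by omega
    rw [e1, ← e2]
    exact h
  · simp only [List.replicate]; simp [V]; decide
  · intro n h6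
    obtain ⟨m, rfl⟩ : ∃ m, n = m + 6 := ⟨n - 6, by omega⟩
    exact V_key m (m+6) le_rfl
end

section
/- For integers $n \geq 2$, $s \geq 1$, $t \geq 1$ with $s < \lfloor (n-1)/2 \rfloor$, the difference $S_{n,s,t} - S_{n,s-1,t-1} - S_{n-1,s-1,t-1}$ telescopes: $\sum_{i=0}^{m} (a_i - b_i - c_i) = r_m$ for all $0 \leq m \leq s-1$, where $a_i = (-1)^i\binom{s}{i}\binom{t+n-2i}{n-2i}$, $b_i = (-1)^i\binom{s-1}{i}\binom{t+n-2i-1}{n-2i}$, $c_i = (-1)^i\binom{s-1}{i}\binom{t+n-2i-2}{n-2i-1}$, $r_m = (-1)^m\binom{s-1}{m}\binom{t+n-2m-2}{n-2m-2}$; consequently $S_{n,s,t} - S_{n,s-1,t-1} - S_{n-1,s-1,t-1} = a_s + r_{s-1} = 0$ since $a_s = (-1)^s\binom{t+n-2s}{n-2s} = -r_{s-1}$. -/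
/-- `aᵢ = (-1)^i C(s,i) C(t+n-2i, n-2i)`. -/
def a (n s t i : ℕ) : ℤ :=
  (-1 : ℤ) ^ i * (s.choose i : ℤ) * ((t + n - 2 * i).choose (n - 2 * i) : ℤ)

/-- `bᵢ = (-1)^i C(s-1,i) C(t+n-2i-1, n-2i)`. -/
def b (n s t i : ℕ) : ℤ :=
  (-1 : ℤ) ^ i * ((s - 1).choose i : ℤ) * ((t + n - 2 * i - 1).choose (n - 2 * i) : ℤ)

/-- `cᵢ = (-1)^i C(s-1,i) C(t+n-2i-2, n-2i-1)`. -/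
def c (n s t i : ℕ) : ℤ :=
  (-1 : ℤ) ^ i * ((s - 1).choose i : ℤ) * ((t + n - 2 * i - 2).choose (n - 2 * i - 1) : ℤ)

/-- `rₘ = (-1)^m C(s-1,m) C(t+n-2m-2, n-2m-2)`. -/
def r (n s t m : ℕ) : ℤ :=
  (-1 : ℤ) ^ m * ((s - 1).choose m : ℤ) * ((t + n - 2 * m - 2).choose (n - 2 * m - 2) : ℤ)

lemma key (t k : ℕ) :
    (t + k + 2).choose (k + 2)
      = (t + k + 1).choose (k + 2) + (t + k).choose (k + 1) + (t + k).choose k := by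
  have h1 : (t + k + 2).choose (k + 2)
      = (t + k + 1).choose (k + 1) + (t + k + 1).choose (k + 2) :=
    Nat.choose_succ_succ (t + k + 1) (k + 1)
  have h2 : (t + k + 1).choose (k + 1) = (t + k).choose k + (t + k).choose (k + 1) :=
    Nat.choose_succ_succ _ _
  omega

lemma base (n s t : ℕ) (hn : 2 ≤ n) :
    a n s t 0 - b n s t 0 - c n s t 0 = r n s t 0 := by
  obtain ⟨k, rfl⟩ : ∃ k, n = k + 2 := ⟨n - 2, by omega⟩
  simp only [a, b, c, r]
  have e1 : t + (k + 2) - 2 * 0 = t + k + 2 := by omega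
  have e2 : k + 2 - 2 * 0 = k + 2 := by omega
  have e3 : t + (k + 2) - 2 * 0 - 1 = t + k + 1 := by omega
  have e4 : t + (k + 2) - 2 * 0 - 2 = t + k := by omega
  have e5 : k + 2 - 2 * 0 - 1 = k + 1 := by omega
  have e6 : k + 2 - 2 * 0 - 2 = k := by omega
  rw [e3, e4, e5, e6, e1, e2, key]
  simp only [Nat.choose_zero_right]
  push_cast
  ring

lemma step (n s t m : ℕ) (hs : 1 ≤ s) (hn : 2 * m + 4 ≤ n) :
    r n s t m + (a n s t (m + 1) - b n s t (m + 1) - c n s t (m + 1)) = r n s t (m + 1) := by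
  simp only [a, b, c, r]
  have e1 : t + n - 2 * (m + 1) = t + (n - 2 * m - 4) + 2 := by omega
  have e2 : n - 2 * (m + 1) = (n - 2 * m - 4) + 2 := by omega
  have e3 : t + n - 2 * (m + 1) - 1 = t + (n - 2 * m - 4) + 1 := by omega
  have e4 : t + n - 2 * (m + 1) - 2 = t + (n - 2 * m - 4) := by omega
  have e5 : n - 2 * (m + 1) - 1 = (n - 2 * m - 4) + 1 := by omega
  have e6 : n - 2 * (m + 1) - 2 = n - 2 * m - 4 := by omega
  have e7 : t + n - 2 * m - 2 = t + (n - 2 * m - 4) + 2 := by omega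
  have e8 : n - 2 * m - 2 = (n - 2 * m - 4) + 2 := by omega
  obtain ⟨s', rfl⟩ : ∃ s', s = s' + 1 := ⟨s - 1, by omega⟩
  simp only [Nat.add_sub_cancel] at *
  have e9 : (s' + 1).choose (m + 1) = s'.choose m + s'.choose (m + 1) :=
    Nat.choose_succ_succ _ _
  rw [e3, e4, e5, e6, e1, e2, e7, e8, e9, key]
  push_cast
  ring

theorem telescoping_sum (n s t : ℕ) (hn : 2 ≤ n) (hs : 1 ≤ s) (ht : 1 ≤ t)
    (hsmall : s < (n - 1) / 2) :
    (∀ m ≤ s - 1,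
      ∑ i ∈ Finset.range (m + 1), (a n s t i - b n s t i - c n s t i) = r n s t m) ∧
    S n s t - S n (s - 1) (t - 1) - S (n - 1) (s - 1) (t - 1)
      = a n s t s + r n s t (s - 1) ∧
    a n s t s = (-1 : ℤ) ^ s * ((t + n - 2 * s).choose (n - 2 * s) : ℤ) ∧
    a n s t s = -r n s t (s - 1) ∧
    S n s t - S n (s - 1) (t - 1) - S (n - 1) (s - 1) (t - 1) = 0 := by
  have hbig : 2 * s + 3 ≤ n := by omega
  have part1 : ∀ m ≤ s - 1,
      ∑ i ∈ Finset.range (m + 1), (a n s t i - b n s t i - c n s t i) = r n s t m := by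
    intro m hm
    induction m with
    | zero => simpa using base n s t hn
    | succ k ih =>
      rw [Finset.sum_range_succ, ih (by omega)]
      exact step n s t k hs (by omega)
  have part3 : a n s t s = (-1 : ℤ) ^ s * ((t + n - 2 * s).choose (n - 2 * s) : ℤ) := by
    simp [a, Nat.choose_self]
  have part4 : a n s t s = -r n s t (s - 1) := by
    rw [part3]
    simp only [r, Nat.choose_self]
    have e1 : t + n - 2 * (s - 1) - 2 = t + n - 2 * s := by omega
    have e2 : n - 2 * (s - 1) - 2 = n - 2 * s := by omega
    have e3 : s = (s - 1) + 1 := by omega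
    rw [e1, e2]
    rw [e3, pow_succ]
    push_cast
    ring
  have part2 : S n s t - S n (s - 1) (t - 1) - S (n - 1) (s - 1) (t - 1)
      = a n s t s + r n s t (s - 1) := by
    have hS1 : S n s t = ∑ i ∈ Finset.range (s + 1), a n s t i := by
      unfold S
      have : min (n / 2) s = s := by omega
      rw [this]
      rfl
    have hS2 : S n (s - 1) (t - 1) = ∑ i ∈ Finset.range s, b n s t i := by
      unfold S
      have : min (n / 2) (s - 1) + 1 = s := by omega
      rw [this]
      refine Finset.sum_congr rfl fun i _ => ?_
      unfold b
      have e1 : t - 1 + n - 2 * i = t + n - 2 * i - 1 := by omega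
      rw [e1]
    have hS3 : S (n - 1) (s - 1) (t - 1) = ∑ i ∈ Finset.range s, c n s t i := by
      unfold S
      have : min ((n - 1) / 2) (s - 1) + 1 = s := by omega
      rw [this]
      refine Finset.sum_congr rfl fun i _ => ?_
      unfold c
      have e1 : t - 1 + (n - 1) - 2 * i = t + n - 2 * i - 2 := by omega
      have e2 : n - 1 - 2 * i = n - 2 * i - 1 := by omega
      rw [e1, e2]
    rw [hS1, hS2, hS3, Finset.sum_range_succ]
    have h1 := part1 (s - 1) le_rfl
    have hs1 : s - 1 + 1 = s := by omega
    rw [hs1] at h1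
    rw [← h1, Finset.sum_sub_distrib, Finset.sum_sub_distrib]
    ring
  refine ⟨part1, part2, part3, part4, ?_⟩
  rw [part2, part4]
  ring
end
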